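/- Let G be a finite tree (a connected acyclic simple graph). Then G is weakly closed if and only if G is bigclaw-free, i.e., there is no graph embedding (injective map preserving both adjacency and non-adjacency) of the bigclaw into G. -/

import Mathlib

/-- `G` is weakly closed: some labeling of the vertices by `1, …, n` is such that for
every edge `{i, j}` with `i < j` and every `i < k < j`, `{i,k} ∈ E(G)` or `{k,j} ∈ E(G)`. -/
def WeaklyClosed {V : Type*} [Fintype V] (G : SimpleGraph V) : Prop :=
  ∃ σ : V ≃ Fin (Fintype.card V), ∀ i j k : V,
    G.Adj i j → σ i < σ k → σ k < σ j → G.Adj i k ∨ G.Adj k j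

/-- The bigclaw: the tree on seven vertices `c = 0`, `a₁ = 1`, `a₂ = 2`, `a₃ = 3`,
`b₁ = 4`, `b₂ = 5`, `b₃ = 6` with edges `{c,aᵢ}` and `{aᵢ,bᵢ}` for `i = 1, 2, 3`. -/
def bigclaw : SimpleGraph (Fin 7) :=
  SimpleGraph.fromEdgeSet {s(0, 1), s(0, 2), s(0, 3), s(1, 4), s(2, 5), s(3, 6)}

/-!
A weakly closed labeling restricts to induced subgraphs, and the bigclaw has none: two of its
leaves lie on the same side of the centre, and the nearer one then lies between the ends of the
other leaf's arm without being adjacent to any of its vertices.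

Conversely, let `u v` be a diametral pair of a bigclaw-free tree. Every vertex off the `u`–`v`
path is adjacent to it: a vertex `y` at distance two from the path, hanging below a path vertex
`z`, would form a bigclaw with `z`, the vertex between them and the four path vertices nearest to
`z` (the path extends two steps beyond `z` on both sides, as `d(u, v)` is maximal). Listing the
path vertices by their distance from `u`, each followed by the leaves attached to it, is then a
weakly closed labeling.
-/

open Function

namespace SimpleGraph

variable {V W : Type*} {G : SimpleGraph V} {u v w x x' y z p : V}

theorem Walk.dist_add_dist_le_length {q : G.Walk u v} (hw : w ∈ q.support) :
    G.dist u w + G.dist w v ≤ q.length := by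
  classical
  calc G.dist u w + G.dist w v ≤ (q.takeUntil w hw).length + (q.dropUntil w hw).length :=
        add_le_add (dist_le _) (dist_le _)
    _ = q.length := by rw [← Walk.length_append, Walk.take_spec]

theorem Connected.exists_adj_dist_add_one (hG : G.Connected) (h : u ≠ y) :
    ∃ x, G.Adj x y ∧ G.dist u x + 1 = G.dist u y := by
  obtain ⟨q, hq⟩ := hG.exists_walk_length_eq_dist y u
  cases q with
  | nil => exact absurd rfl h
  | @cons _ x _ hyx q =>
    refine ⟨x, hyx.symm, ?_⟩
    have h₁ : G.dist u x ≤ q.length := dist_comm (G := G) ▸ dist_le q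
    have h₂ : G.dist u y ≤ G.dist u x + G.dist x y := hG.dist_triangle
    rw [dist_comm (u := x), dist_eq_one_iff_adj.mpr hyx] at h₂
    rw [Walk.length_cons, dist_comm] at hq
    omega

/-- `s(p, y)` is a bridge, and the detour `p ⟶ u ⟶ v ⟶ y` through `q` can only cross it
inside `q`, since geodesics from `u` to `p` and from `v` to `y` avoid `y` and `p`. -/
theorem IsTree.mem_edges_of_adj_of_dist_lt (hG : G.IsTree) (hpy : G.Adj p y)
    (hu : G.dist u p < G.dist u y) (hv : G.dist v y < G.dist v p) (q : G.Walk u v) :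
    s(p, y) ∈ q.edges := by
  obtain ⟨α, hα⟩ := hG.connected.exists_walk_length_eq_dist u p
  obtain ⟨β, hβ⟩ := hG.connected.exists_walk_length_eq_dist v y
  have hbridge := isBridge_iff_forall_walk_mem_edges.mp
    (isAcyclic_iff_forall_adj_isBridge.mp hG.isAcyclic hpy) ((α.reverse.append q).append β)
  simp only [Walk.edges_append, Walk.edges_reverse, List.mem_append, List.mem_reverse] at hbridge
  rcases hbridge with (h | h) | h
  · have := Walk.dist_add_dist_le_length (α.snd_mem_support_of_mem_edges h)
    omega
  · exact h
  · have := Walk.dist_add_dist_le_length (β.fst_mem_support_of_mem_edges h)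
    omega

theorem IsTree.eq_of_adj_of_dist_add_one (hG : G.IsTree) (hx : G.Adj x y) (hx' : G.Adj x' y)
    (h : G.dist u x + 1 = G.dist u y) (h' : G.dist u x' + 1 = G.dist u y) : x = x' := by
  by_contra hne
  have hx'y : G.dist x' y = 1 := dist_eq_one_iff_adj.mpr hx'
  have hx'x : 0 < G.dist x' x := hG.connected.pos_dist_of_ne (Ne.symm hne)
  obtain ⟨q, hq⟩ := hG.connected.exists_walk_length_eq_dist u x'
  have hy := q.snd_mem_support_of_mem_edges <| hG.mem_edges_of_adj_of_dist_lt hx (by omega)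
    (by rcases hG.dist_eq_dist_add_one_of_adj x' hx with h | h <;> omega) q
  have := Walk.dist_add_dist_le_length hy
  omega

theorem IsTree.dist_add_dist_eq_of_adj (hG : G.IsTree) (hpy : G.Adj p y)
    (hu : G.dist u p < G.dist u y) (hv : G.dist v y < G.dist v p) :
    G.dist u y + G.dist y v = G.dist u v := by
  obtain ⟨q, hq⟩ := hG.connected.exists_walk_length_eq_dist u v
  have := Walk.dist_add_dist_le_length
    (q.snd_mem_support_of_mem_edges (hG.mem_edges_of_adj_of_dist_lt hpy hu hv q))
  have := hG.connected.dist_triangle (u := u) (v := y) (w := v)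
  omega

/-- The geodesic interval between `u` and `v`; in a tree, the vertices of the `u`–`v` path. -/
def spine (G : SimpleGraph V) (u v : V) : Set V := {x | G.dist u x + G.dist x v = G.dist u v}

theorem mem_spine : x ∈ G.spine u v ↔ G.dist u x + G.dist x v = G.dist u v := Iff.rfl

theorem spine_comm (G : SimpleGraph V) (u v : V) : G.spine u v = G.spine v u := by
  ext x
  simp only [mem_spine, dist_comm (u := x), dist_comm (u := v) (v := u)]
  omega

theorem left_mem_spine (G : SimpleGraph V) (u v : V) : u ∈ G.spine u v := by
  simp [spine]

theorem Connected.mem_spine_of_adj (hG : G.Connected) (hy : y ∈ G.spine u v) (hxy : G.Adj x y)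
    (h : G.dist u x + 1 = G.dist u y) : x ∈ G.spine u v := by
  have h₁ : G.dist x v ≤ G.dist x y + G.dist y v := hG.dist_triangle
  have h₂ : G.dist u v ≤ G.dist u x + G.dist x v := hG.dist_triangle
  rw [dist_eq_one_iff_adj.mpr hxy] at h₁
  simp only [mem_spine] at hy ⊢
  omega

theorem IsTree.injOn_dist_spine (hG : G.IsTree) : Set.InjOn (G.dist u) (G.spine u v) := by
  suffices ∀ n x x', x ∈ G.spine u v → x' ∈ G.spine u v → G.dist u x = n → G.dist u x' = n →
      x = x' from fun x hx x' hx' h => this _ x x' hx hx' rfl h.symm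
  intro n
  induction n with
  | zero =>
    intro x x' _ _ hx hx'
    rw [← hG.connected.dist_eq_zero_iff.mp hx, hG.connected.dist_eq_zero_iff.mp hx']
  | succ n ih =>
    intro x x' hx hx' hxn hx'n
    obtain ⟨p, hpx, hp⟩ := hG.connected.exists_adj_dist_add_one (u := u) (y := x)
      (by rintro rfl; simp at hxn)
    obtain ⟨p', hp'x', hp'⟩ := hG.connected.exists_adj_dist_add_one (u := u) (y := x')
      (by rintro rfl; simp at hx'n)
    have hpS := hG.connected.mem_spine_of_adj hx hpx hp
    obtain rfl : p = p' := ih p p' hpS (hG.connected.mem_spine_of_adj hx' hp'x' hp') (by omega)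
      (by omega)
    simp only [mem_spine] at hx hx' hpS
    exact hG.eq_of_adj_of_dist_add_one (u := v) hpx.symm hp'x'.symm
      (by rw [dist_comm, dist_comm (u := v)]; omega) (by rw [dist_comm, dist_comm (u := v)]; omega)

theorem IsTree.dist_add_one_of_not_mem_spine (hG : G.IsTree) (hy : y ∉ G.spine u v)
    (hxy : G.Adj x y) (h : G.dist u x + 1 = G.dist u y) : G.dist x v + 1 = G.dist y v := by
  rw [dist_comm, dist_comm (u := y)]
  rcases hG.dist_eq_dist_add_one_of_adj v hxy with h' | h'
  · exact absurd (hG.dist_add_dist_eq_of_adj hxy (by omega) (by omega)) hy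
  · omega

theorem IsAcyclic.adj_of_adj_map {H : SimpleGraph W} (hH : H.Connected) (hG : G.IsAcyclic)
    (f : H →g G) (hf : Injective f) {a b : W} (h : G.Adj (f a) (f b)) : H.Adj a b := by
  obtain ⟨q, hq, -⟩ := hH.exists_path_of_dist a b
  have := congrArg (fun r : G.Path (f a) (f b) => r.1.length) <|
    (hG.subsingleton_path (f a) (f b)).elim ⟨q.map f, hq.map hf⟩ (Path.singleton h)
  exact Walk.adj_of_length_eq_one (by simpa using this)

def IsAcyclic.embeddingOfInjective {H : SimpleGraph W} (hH : H.Connected) (hG : G.IsAcyclic)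
    (f : H →g G) (hf : Injective f) : H ↪g G where
  toFun := f
  inj' := hf
  map_rel_iff' := ⟨hG.adj_of_adj_map hH f hf, f.map_adj⟩

def bigclawHom {c a₁ a₂ a₃ b₁ b₂ b₃ : V} (h₁ : G.Adj c a₁) (h₂ : G.Adj c a₂) (h₃ : G.Adj c a₃)
    (h₄ : G.Adj a₁ b₁) (h₅ : G.Adj a₂ b₂) (h₆ : G.Adj a₃ b₃) : bigclaw →g G where
  toFun := ![c, a₁, a₂, a₃, b₁, b₂, b₃]
  map_rel' {i j} hij := by
    fin_cases i <;> fin_cases j <;> simp [bigclaw] at hij ⊢ <;>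
      first | assumption | exact Adj.symm ‹_›

theorem bigclaw_connected : bigclaw.Connected := by
  have r : ∀ {i j : Fin 7}, bigclaw.Adj i j → bigclaw.Reachable i j := Adj.reachable
  have hc : ∀ i, bigclaw.Reachable 0 i := by
    intro i
    fin_cases i
    exacts [.rfl, r (by simp [bigclaw]), r (by simp [bigclaw]), r (by simp [bigclaw]),
      (r (j := 1) (by simp [bigclaw])).trans (r (by simp [bigclaw])),
      (r (j := 2) (by simp [bigclaw])).trans (r (by simp [bigclaw])),
      (r (j := 3) (by simp [bigclaw])).trans (r (by simp [bigclaw]))]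
  exact ⟨fun i j => (hc i).symm.trans (hc j)⟩

/-- The bigclaw is centred at `z`, with two arms along the spine and one through `x`. -/
theorem IsTree.nonempty_bigclaw_embedding (hG : G.IsTree)
    (hmax : ∀ a b, G.dist a b ≤ G.dist u v) (hz : z ∈ G.spine u v) (hx : x ∉ G.spine u v)
    (hzx : G.Adj z x) (hxy : G.Adj x y) (hzx' : G.dist u z + 1 = G.dist u x)
    (hxy' : G.dist u x + 1 = G.dist u y) : Nonempty (bigclaw ↪g G) := by
  have hy : y ∉ G.spine u v := fun hy => hx (hG.connected.mem_spine_of_adj hy hxy hxy')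
  have hxv := hG.dist_add_one_of_not_mem_spine hx hzx hzx'
  have hyv := hG.dist_add_one_of_not_mem_spine hy hxy hxy'
  have hmaxu := hmax u y
  have hmaxv := hmax y v
  have hzD := mem_spine.mp hz
  obtain ⟨P₁, hP₁z, hP₁⟩ := hG.connected.exists_adj_dist_add_one (u := u) (y := z)
    (by rintro rfl; simp at hzD; omega)
  obtain ⟨P₂, hP₂P₁, hP₂⟩ := hG.connected.exists_adj_dist_add_one (u := u) (y := P₁)
    (by rintro rfl; simp at hP₁; omega)
  obtain ⟨Q₁, hQ₁z, hQ₁⟩ := hG.connected.exists_adj_dist_add_one (u := v) (y := z)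
    (by rintro rfl; simp at hzD; omega)
  obtain ⟨Q₂, hQ₂Q₁, hQ₂⟩ := hG.connected.exists_adj_dist_add_one (u := v) (y := Q₁)
    (by rintro rfl; rw [dist_self, dist_comm] at hQ₁; omega)
  have hQ₁S : Q₁ ∈ G.spine u v := G.spine_comm v u ▸
    hG.connected.mem_spine_of_adj (G.spine_comm u v ▸ hz) hQ₁z hQ₁
  have hQ₂S : Q₂ ∈ G.spine u v := G.spine_comm v u ▸
    hG.connected.mem_spine_of_adj (G.spine_comm u v ▸ hQ₁S) hQ₂Q₁ hQ₂
  have hQ₁D := mem_spine.mp hQ₁S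
  have hQ₂D := mem_spine.mp hQ₂S
  rw [dist_comm (u := v), dist_comm (u := v)] at hQ₁ hQ₂
  refine ⟨hG.isAcyclic.embeddingOfInjective bigclaw_connected
    (bigclawHom hP₁z.symm hQ₁z.symm hzx hP₂P₁.symm hQ₂Q₁.symm hxy) ?_⟩
  intro i j hij
  have hd := congrArg (G.dist u) hij
  fin_cases i <;> fin_cases j <;> simp [bigclawHom] at hij hd ⊢ <;>
    first | omega | (subst hij; contradiction)

theorem IsTree.mem_spine_of_adj_of_isEmpty_bigclaw (hG : G.IsTree)
    (hfree : IsEmpty (bigclaw ↪g G)) (hmax : ∀ a b, G.dist a b ≤ G.dist u v) (hxy : G.Adj x y)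
    (h : G.dist u x + 1 = G.dist u y) : x ∈ G.spine u v := by
  induction hn : G.dist u y using Nat.strong_induction_on generalizing x y with
  | _ n ih =>
    by_cases hy : y ∈ G.spine u v
    · exact hG.connected.mem_spine_of_adj hy hxy h
    by_contra hx
    obtain ⟨z, hzx, hz⟩ := hG.connected.exists_adj_dist_add_one (u := u) (y := x)
      (by rintro rfl; exact hx (G.left_mem_spine u v))
    exact hfree.false
      (hG.nonempty_bigclaw_embedding hmax (ih _ (by omega) hzx hz rfl) hx hzx hxy hz h).some

section Labeling

variable {α : Type*} [LinearOrder α]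

def IsWeaklyClosedLabeling (G : SimpleGraph V) (f : V → α) : Prop :=
  ∀ i j k, G.Adj i j → f i < f k → f k < f j → G.Adj i k ∨ G.Adj k j

theorem IsWeaklyClosedLabeling.comp {H : SimpleGraph W} {f : V → α}
    (h : G.IsWeaklyClosedLabeling f) (e : H ↪g G) : H.IsWeaklyClosedLabeling (f ∘ e) :=
  fun i j k hij hik hkj => by
    simpa only [e.map_adj_iff] using h _ _ _ (e.map_adj_iff.mpr hij) hik hkj

theorem IsWeaklyClosedLabeling.exists_adj_of_walk {f : V → α} (h : G.IsWeaklyClosedLabeling f)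
    (hf : Injective f) {k : V} (q : G.Walk x y) (hk : k ∉ q.support) (hxk : f x < f k)
    (hky : f k < f y) : ∃ w ∈ q.support, G.Adj k w := by
  induction q with
  | nil => exact absurd (hxk.trans hky) (lt_irrefl _)
  | @cons x x' y hxx' q ih =>
    rw [Walk.support_cons, List.mem_cons, not_or] at hk
    have hkx' : k ≠ x' := by rintro rfl; exact hk.2 q.start_mem_support
    rcases (hf.ne hkx').lt_or_gt with hk' | hk'
    · rcases h x x' k hxx' hxk hk' with hxk | hkx'
      · exact ⟨x, q.support.mem_cons_self .., hxk.symm⟩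
      · exact ⟨x', List.mem_cons_of_mem _ q.start_mem_support, hkx'⟩
    · obtain ⟨w, hw, hkw⟩ := ih hk.2 hk' hky
      exact ⟨w, List.mem_cons_of_mem _ hw, hkw⟩

theorem not_isWeaklyClosedLabeling_bigclaw {f : Fin 7 → α} (hf : Injective f) :
    ¬ bigclaw.IsWeaklyClosedLabeling f := by
  -- Two leaves lie on the same side of the centre; the nearer one lies between the centre and
  -- the other leaf, yet is adjacent to no vertex of the arm joining them.
  intro h
  let a : Fin 3 → Fin 7 := ![1, 2, 3]
  let b : Fin 3 → Fin 7 := ![4, 5, 6]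
  let arm (i : Fin 3) : bigclaw.Walk 0 (b i) :=
    .cons (v := a i) (by fin_cases i <;> simp [bigclaw, a])
      (.cons (by fin_cases i <;> simp [bigclaw, a, b]) .nil)
  have hleaf : ∀ i j, i ≠ j →
      b j ∉ (arm i).support ∧ ∀ w ∈ (arm i).support, ¬ bigclaw.Adj (b j) w := by
    intro i j hij
    rw [show (arm i).support = [0, a i, b i] from rfl]
    fin_cases i <;> fin_cases j <;> simp [a, b, bigclaw] at hij ⊢
  have hb : Injective b := by decide
  have hb0 : ∀ i, b i ≠ 0 := by decide
  have above : ∀ i j, i ≠ j → f 0 < f (b j) → f (b j) < f (b i) → False := by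
    intro i j hij h₁ h₂
    obtain ⟨w, hw, hjw⟩ := h.exists_adj_of_walk hf (arm i) (hleaf i j hij).1 h₁ h₂
    exact (hleaf i j hij).2 w hw hjw
  have below : ∀ i j, i ≠ j → f (b i) < f (b j) → f (b j) < f 0 → False := by
    intro i j hij h₁ h₂
    obtain ⟨w, hw, hjw⟩ := h.exists_adj_of_walk hf (arm i).reverse
      (by simpa using (hleaf i j hij).1) h₁ h₂
    exact (hleaf i j hij).2 w (by simpa using hw) hjw
  have same_side : ∀ i j, i ≠ j → f (b i) < f (b j) → (f (b i) < f 0 ↔ f (b j) < f 0) →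
      False := by
    intro i j hij hlt hside
    by_cases hj : f (b j) < f 0
    · exact below i j hij hlt hj
    · have hi : f 0 < f (b i) :=
        lt_of_le_of_ne (not_lt.mp (mt hside.mp hj)) (hf.ne (hb0 i)).symm
      exact above j i hij.symm hi hlt
  obtain ⟨i, j, hij, hside⟩ :=
    Fintype.exists_ne_map_eq_of_card_lt (fun i => decide (f (b i) < f 0)) (by simp)
  rw [decide_eq_decide] at hside
  rcases (hf.ne (hb.ne hij)).lt_or_gt with hlt | hlt
  · exact same_side i j hij hlt hside
  · exact same_side j i hij.symm hlt hside.symm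

theorem weaklyClosed_of_isWeaklyClosedLabeling [Fintype V] {f : V → α} (hf : Injective f)
    (h : G.IsWeaklyClosedLabeling f) : WeaklyClosed G := by
  let _ : LinearOrder V := LinearOrder.lift' f hf
  let σ := (Fintype.orderIsoFinOfCardEq V rfl).symm
  exact ⟨σ.toEquiv, fun i j k hij hik hkj => h i j k hij (σ.lt_iff_lt.mp hik) (σ.lt_iff_lt.mp hkj)⟩

theorem weaklyClosed_of_rank [Fintype V] (g : V → α)
    (hg : ∀ i j k, G.Adj i j → k ≠ i → k ≠ j → g i ≤ g k → g k ≤ g j →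
      G.Adj i k ∨ G.Adj k j) : WeaklyClosed G := by
  let e := Fintype.equivFin V
  refine weaklyClosed_of_isWeaklyClosedLabeling (f := fun x => toLex (g x, e x)) ?_ ?_
  · intro x y hxy
    exact e.injective (Prod.ext_iff.mp (toLex.injective hxy)).2
  · intro i j k hij hik hkj
    exact hg i j k hij (fun h => hik.ne (h ▸ rfl)) (fun h => hkj.ne (h ▸ rfl))
      (Prod.Lex.monotone_fst _ _ hik.le) (Prod.Lex.monotone_fst _ _ hkj.le)

end Labeling

theorem weaklyClosed_of_caterpillar [Fintype V] (d : V → ℕ) (S : Set V)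
    (hadj : ∀ ⦃x y⦄, G.Adj x y → d y = d x + 1 ∨ d x = d y + 1) (hinj : Set.InjOn d S)
    (hlower : ∀ ⦃x y⦄, G.Adj x y → d x + 1 = d y → x ∈ S)
    (hdom : ∀ y ∉ S, ∃ x ∈ S, G.Adj x y) : WeaklyClosed G := by
  classical
  -- A spine vertex of level `n` gets rank `2n+1` and its leaves (level `n+1`) get `2n+2`.
  refine weaklyClosed_of_rank (fun x => 2 * d x + if x ∈ S then 1 else 0) ?_
  intro i j k hij hki hkj hik hkj'
  rcases hadj hij with hji | hij'
  · have hi := hlower hij hji.symm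
    rw [if_pos hi] at hik
    by_cases hk : k ∈ S
    · rw [if_pos hk] at hik hkj'
      by_cases hj : j ∈ S
      · rw [if_pos hj] at hkj'
        rcases (by omega : d k = d i ∨ d k = d j) with h | h
        · exact absurd (hinj hk hi h) hki
        · exact absurd (hinj hk hj h) hkj
      · rw [if_neg hj] at hkj'
        exact absurd (hinj hk hi (by omega)) hki
    · rw [if_neg hk] at hik hkj'
      obtain ⟨x, hx, hxk⟩ := hdom k hk
      have hdk : d k = d i + 1 := by split_ifs at hkj' <;> omega
      have hdx : d x + 1 = d k := by
        rcases hadj hxk with h | h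
        · exact h.symm
        · exact absurd (hlower hxk.symm h.symm) hk
      exact Or.inl (hinj hx hi (by omega) ▸ hxk)
  · have hj := hlower hij.symm hij'.symm
    rw [if_pos hj] at hkj'
    split_ifs at hik hkj' <;> omega

end SimpleGraph

open SimpleGraph

theorem WeaklyClosed.isEmpty_bigclaw_embedding {V : Type*} [Fintype V] {G : SimpleGraph V}
    (h : WeaklyClosed G) : IsEmpty (bigclaw ↪g G) := by
  obtain ⟨σ, hσ⟩ := h
  exact ⟨fun e => not_isWeaklyClosedLabeling_bigclaw (σ.injective.comp e.injective)
    (IsWeaklyClosedLabeling.comp hσ e)⟩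

/-- A finite tree is weakly closed iff it is bigclaw-free. -/
theorem tree_weaklyClosed_iff_bigclaw_free {V : Type*} [Fintype V] (G : SimpleGraph V)
    (hG : G.IsTree) : WeaklyClosed G ↔ IsEmpty (bigclaw ↪g G) := by
  refine ⟨WeaklyClosed.isEmpty_bigclaw_embedding, fun hfree => ?_⟩
  have : Nonempty V := hG.connected.nonempty
  obtain ⟨u, v, huv⟩ := G.exists_dist_eq_diam
  have hmax : ∀ a b, G.dist a b ≤ G.dist u v := fun a b =>
    huv ▸ dist_le_diam (connected_iff_ediam_ne_top.mp hG.connected)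
  have hlower := fun x y => hG.mem_spine_of_adj_of_isEmpty_bigclaw (x := x) (y := y) hfree hmax
  refine weaklyClosed_of_caterpillar (G.dist u) (G.spine u v)
    (fun x y h => (hG.dist_eq_dist_add_one_of_adj u h).symm) hG.injOn_dist_spine hlower ?_
  intro y hy
  obtain ⟨x, hxy, hx⟩ := hG.connected.exists_adj_dist_add_one (u := u) (y := y)
    (by rintro rfl; exact hy (G.left_mem_spine u v))
  exact ⟨x, hlower x y hxy hx, hxy⟩
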